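/- Let p be an odd prime, s ≥ 1, n ≥ 1, F_q a finite field of characteristic p, ξ ∈ F_q nonzero with x^n - ξ and x^n + ξ irreducible over F_q, and λ = (ξ²)^{p^s}. Let i, j be integers with 2p^{s-1} < i < p^s and 0 < j ≤ p^{s-1}. Then the minimum Hamming distance of the ideal C = ⟨(x^n - ξ)^i (x^n + ξ)^j⟩ in F_q[x]/⟨x^{2np^s} - λ⟩ equals 4. -/

import Mathlib

/-!
The generator `g = (xⁿ - ξ)ⁱ (xⁿ + ξ)ʲ` divides `x^(2np^s) - λ = ((xⁿ - ξ)(xⁿ + ξ))^(p^s)`, so the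
code consists of the multiples of `g` of degree `< 2np^s`. Among them is
`(xⁿ - ξ)^(p^s) (xⁿ + ξ)^(p^(s-1)) = (x^(np^s) - ξ^(p^s)) (x^(np^(s-1)) + ξ^(p^(s-1)))`,
of weight 4.

Conversely, after removing a power of `x` we may assume `f(0) ≠ 0`. Let `θ = x d/dx`; the
operator `θ - c` lowers the multiplicity of a prime `π ∤ x` in `f` by at most one and multiplies
`xᵏ` by `k - c`. If `f` has at most three terms `1, xᵐ, xᵘ` and `π³ ∣ f`, then
`(θ - m)(θ - u) f = m u f(0)` forces `p ∣ m u`, and one more application of `θ` shows that all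
exponents of `f` are divisible by `p`, so `f = h^p` for some `h` with as many terms as `f`. The
multiplicity of `xⁿ - ξ` drops by a factor `p` at each such step; after `s` steps from
`(xⁿ - ξ)^(2p^(s-1)+1) (xⁿ + ξ) ∣ f` we reach a nonzero polynomial of degree `< 2n` divisible by
`(xⁿ - ξ)(xⁿ + ξ)`, which is absurd.
-/

open Polynomial

theorem Finset.exists_subset_pair_of_card_le_two {α : Type*} [DecidableEq α] [Nonempty α]
    {s : Finset α} (hs : s.card ≤ 2) : ∃ a b, s ⊆ {a, b} := by
  interval_cases h : s.card
  · obtain ⟨a⟩ := ‹Nonempty α›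
    exact ⟨a, a, by simp [Finset.card_eq_zero.mp h]⟩
  · obtain ⟨a, rfl⟩ := Finset.card_eq_one.mp h
    exact ⟨a, a, by simp⟩
  · obtain ⟨a, b, -, rfl⟩ := Finset.card_eq_two.mp h
    exact ⟨a, b, subset_rfl⟩

theorem Prime.pow_succ_dvd_of_pow_mul_succ_dvd_pow {M : Type*} [CommMonoidWithZero M]
    [IsCancelMulZero M] {π g : M} (hπ : Prime π) {q m : ℕ} (h : π ^ (q * m + 1) ∣ g ^ q) :
    π ^ (m + 1) ∣ g := by
  rw [pow_dvd_iff_le_emultiplicity, emultiplicity_pow hπ] at h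
  rw [pow_dvd_iff_le_emultiplicity]
  generalize emultiplicity π g = e at h ⊢
  induction e using ENat.recTopCoe with
  | top => exact le_top
  | coe e =>
    norm_cast at h ⊢
    nlinarith

theorem Ideal.Quotient.mk_mem_span_singleton_mk_iff {R : Type*} [CommRing R] {M G f : R}
    (hG : G ∣ M) :
    Ideal.Quotient.mk (Ideal.span {M}) f ∈ Ideal.span {Ideal.Quotient.mk (Ideal.span {M}) G} ↔
      G ∣ f := by
  rw [← Set.image_singleton, ← Ideal.map_span,
    Ideal.mem_quotient_iff_mem (Ideal.span_singleton_le_span_singleton.mpr hG),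
    Ideal.mem_span_singleton]

namespace Polynomial

section CommSemiring

variable {R : Type*} [CommSemiring R]

theorem card_support_expand {p : ℕ} (hp : 0 < p) (f : R[X]) :
    (expand R p f).support.card = f.support.card := by
  suffices (expand R p f).support = f.support.map ⟨(· * p), mul_left_injective₀ hp.ne'⟩ by
    rw [this, Finset.card_map]
  ext n
  simp only [mem_support_iff, Finset.mem_map, Function.Embedding.coeFn_mk, coeff_expand hp]
  constructor
  · intro h
    split_ifs at h with hpn
    · exact ⟨n / p, h, Nat.div_mul_cancel hpn⟩
    · exact absurd rfl h
  · rintro ⟨k, hk, rfl⟩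
    rwa [if_pos (dvd_mul_left p k), Nat.mul_div_cancel k hp]

theorem card_support_X_pow_mul (k : ℕ) (f : R[X]) :
    (X ^ k * f).support.card = f.support.card := by
  suffices (X ^ k * f).support = f.support.map (addRightEmbedding k) by
    rw [this, Finset.card_map]
  ext n
  simp only [mem_support_iff, Finset.mem_map, addRightEmbedding_apply, coeff_X_pow_mul']
  constructor
  · intro h
    split_ifs at h with hkn
    · exact ⟨n - k, h, Nat.sub_add_cancel hkn⟩
    · exact absurd rfl h
  · rintro ⟨m, hm, rfl⟩
    rwa [if_pos (Nat.le_add_left k m), Nat.add_sub_cancel]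

theorem exists_pow_eq_of_derivative_eq_zero [NoZeroDivisors R] (p : ℕ) [Fact p.Prime]
    [CharP R p] [PerfectRing R p] {f : R[X]} (hf : derivative f = 0) :
    ∃ g : R[X], g ^ p = f ∧ g.support.card = f.support.card := by
  have hp : p.Prime := Fact.out
  refine ⟨(contract p f).map (frobeniusEquiv R p).symm, ?_, ?_⟩
  · rw [← polynomial_expand_eq, expand_contract p hf hp.ne_zero]
  · rw [support_map_of_injective _ (frobeniusEquiv R p).symm.injective,
      ← card_support_expand hp.pos, expand_contract p hf hp.ne_zero]

end CommSemiring

section CommRing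

variable {R : Type*} [CommRing R]

theorem coeff_X_mul_derivative_sub_C_mul (f : R[X]) (c : R) (k : ℕ) :
    (X * derivative f - C c * f).coeff k = (k - c) * f.coeff k := by
  rw [coeff_sub, coeff_C_mul]
  cases k with
  | zero => simp
  | succ k => rw [coeff_X_mul, coeff_derivative]; push_cast; ring

theorem pow_dvd_X_mul_derivative_sub_C_mul {π f : R[X]} {j : ℕ} (c : R) (h : π ^ (j + 1) ∣ f) :
    π ^ j ∣ X * derivative f - C c * f :=
  dvd_sub (dvd_mul_of_dvd_right (by simpa using pow_sub_one_dvd_derivative_of_pow_dvd h) X)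
    (dvd_mul_of_dvd_right ((pow_dvd_pow π j.le_succ).trans h) _)

end CommRing

section IsDomain

variable {R : Type*} [CommRing R] [IsDomain R]

theorem card_support_X_pow_sub_C_mul_X_pow_add_C {a b : ℕ} (hb : 0 < b) (hba : b < a) {θ η : R}
    (hθ : θ ≠ 0) (hη : η ≠ 0) : ((X ^ a - C θ) * (X ^ b + C η)).support.card = 4 := by
  rw [card_support_eq]
  refine ⟨![0, b, a, a + b], ![-(θ * η), -θ, η, 1], ?_, ?_, ?_⟩
  · rw [Fin.strictMono_iff_lt_succ]
    intro i
    fin_cases i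
    exacts [hb, hba, Nat.lt_add_of_pos_right hb]
  · intro i
    fin_cases i <;> simp [hθ, hη]
  · simp only [Fin.sum_univ_four, Matrix.cons_val, map_neg, map_mul, map_one, pow_zero]
    ring

end IsDomain

section Field

variable {K : Type*} [Field K]

theorem not_dvd_X_of_coeff_zero_ne_zero {π : K[X]} (hπ : Irreducible π)
    (h0 : π.coeff 0 ≠ 0) : ¬ π ∣ X := fun h =>
  h0 (X_dvd_iff.mp ((hπ.associated_of_dvd irreducible_X h).symm.dvd))

theorem eq_zero_of_dvd_monomial {π : K[X]} (hπ : Prime π) (hX : ¬ π ∣ X) {k : ℕ} {a : K}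
    (h : π ∣ monomial k a) : a = 0 := by
  by_contra ha
  rw [← C_mul_X_pow_eq_monomial] at h
  rcases hπ.dvd_or_dvd h with h | h
  · exact hπ.not_isUnit (isUnit_of_dvd_unit h (isUnit_C.mpr (IsUnit.mk0 a ha)))
  · exact hX (hπ.dvd_of_dvd_pow h)

theorem derivative_eq_zero_of_pow_two_dvd {π f : K[X]} (hπ : Prime π) (hX : ¬ π ∣ X)
    {m u : ℕ} (hsupp : f.support ⊆ {0, m, u}) (hm : (m : K) = 0) (hdvd : π ^ 2 ∣ f) :
    derivative f = 0 := by
  have hcast : ∀ k, k ≠ u → (k : K) * f.coeff k = 0 := by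
    intro k hku
    by_cases hk : f.coeff k = 0
    · rw [hk, mul_zero]
    · have := hsupp (mem_support_iff.mpr hk)
      simp only [Finset.mem_insert, Finset.mem_singleton] at this
      rcases this with rfl | rfl | rfl
      · simp
      · rw [hm, zero_mul]
      · exact absurd rfl hku
  have hθ : X * derivative f - C 0 * f = monomial u ((u : K) * f.coeff u) := by
    ext k
    rw [coeff_X_mul_derivative_sub_C_mul, sub_zero, coeff_monomial]
    split_ifs with hku
    · rw [hku]
    · exact hcast k (Ne.symm hku)
  have hu : (u : K) * f.coeff u = 0 := by
    refine eq_zero_of_dvd_monomial hπ hX (k := u) ?_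
    rw [← hθ]
    simpa using pow_dvd_X_mul_derivative_sub_C_mul (j := 1) (0 : K) hdvd
  ext k
  rw [coeff_derivative, coeff_zero, mul_comm]
  by_cases hku : k + 1 = u
  · subst hku
    exact_mod_cast hu
  · exact_mod_cast hcast (k + 1) hku

theorem derivative_eq_zero_of_pow_three_dvd {π f : K[X]} (hπ : Prime π) (hX : ¬ π ∣ X)
    (hf0 : f.coeff 0 ≠ 0) (hcard : f.support.card ≤ 3) (hdvd : π ^ 3 ∣ f) :
    derivative f = 0 := by
  obtain ⟨m, u, hsupp⟩ : ∃ m u, f.support ⊆ {0, m, u} := by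
    obtain ⟨m, u, h⟩ := Finset.exists_subset_pair_of_card_le_two (s := f.support.erase 0) (by
      rw [Finset.card_erase_of_mem (mem_support_iff.mpr hf0)]; omega)
    refine ⟨m, u, fun k hk => ?_⟩
    rcases eq_or_ne k 0 with rfl | hk0
    · exact Finset.mem_insert_self 0 _
    · exact Finset.mem_insert_of_mem (h (Finset.mem_erase.mpr ⟨hk0, hk⟩))
  -- With `θ = X * derivative`, `(θ - m) (θ - u) f` is the constant `m * u * f.coeff 0`.
  have hmu : (m : K) * u * f.coeff 0 = 0 := by
    refine eq_zero_of_dvd_monomial hπ hX (k := 0) ?_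
    have h := pow_dvd_X_mul_derivative_sub_C_mul (j := 1) (m : K)
      (pow_dvd_X_mul_derivative_sub_C_mul (j := 2) (u : K) hdvd)
    rw [pow_one] at h
    convert h using 1
    ext k
    rw [coeff_monomial, coeff_X_mul_derivative_sub_C_mul, coeff_X_mul_derivative_sub_C_mul]
    split_ifs with hk
    · subst hk; push_cast; ring
    · by_cases hfk : f.coeff k = 0
      · rw [hfk, mul_zero, mul_zero]
      · have := hsupp (mem_support_iff.mpr hfk)
        simp only [Finset.mem_insert, Finset.mem_singleton] at this
        rcases this with rfl | rfl | rfl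
        · exact absurd rfl hk
        · ring
        · ring
  have hdvd2 : π ^ 2 ∣ f := (pow_dvd_pow π (by norm_num)).trans hdvd
  rcases (by simpa only [mul_eq_zero, hf0, or_false] using hmu : (m : K) = 0 ∨ (u : K) = 0)
    with hm | hu
  · exact derivative_eq_zero_of_pow_two_dvd hπ hX hsupp hm hdvd2
  · exact derivative_eq_zero_of_pow_two_dvd hπ hX (Finset.pair_comm m u ▸ hsupp) hu hdvd2

end Field

section Descent

variable {K : Type*} [Field K] (p : ℕ) [Fact p.Prime] [CharP K p] [PerfectRing K p]

theorem exists_pow_eq_of_pow_three_dvd {π f : K[X]} (hπ : Prime π) (hX : ¬ π ∣ X)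
    (hf0 : f.coeff 0 ≠ 0) (hcard : f.support.card ≤ 3) (hdvd : π ^ 3 ∣ f) :
    ∃ g : K[X], g ^ p = f ∧ g.support.card = f.support.card ∧ g.coeff 0 ≠ 0 := by
  obtain ⟨g, rfl, hg⟩ := exists_pow_eq_of_derivative_eq_zero p
    (derivative_eq_zero_of_pow_three_dvd hπ hX hf0 hcard hdvd)
  refine ⟨g, rfl, hg, fun h => hf0 ?_⟩
  rw [coeff_zero_eq_eval_zero, eval_pow, ← coeff_zero_eq_eval_zero, h,
    zero_pow (Fact.out : p.Prime).ne_zero]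

theorem four_le_card_support_of_coeff_zero_ne_zero {π₁ π₂ : K[X]} (h₁ : Prime π₁)
    (h₂ : Prime π₂) (hX : ¬ π₁ ∣ X) (hcop : IsCoprime π₁ π₂) (t : ℕ) {f : K[X]}
    (hf0 : f.coeff 0 ≠ 0) (hdeg : f.natDegree < (π₁ * π₂).natDegree * p ^ (t + 1))
    (hd₁ : π₁ ^ (2 * p ^ t + 1) ∣ f) (hd₂ : π₂ ∣ f) : 4 ≤ f.support.card := by
  have hp := (Fact.out : p.Prime).pos
  induction t generalizing f with
  | zero =>
    by_contra! hcard
    obtain ⟨g, rfl, -, hg0⟩ := exists_pow_eq_of_pow_three_dvd p h₁ hX hf0 (by omega)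
      (by simpa using hd₁)
    have hg : g ≠ 0 := fun h => hg0 (by rw [h, coeff_zero])
    have h₁g : π₁ ∣ g := h₁.dvd_of_dvd_pow ((dvd_pow_self π₁ (by norm_num)).trans hd₁)
    have := natDegree_le_of_dvd (hcop.mul_dvd h₁g (h₂.dvd_of_dvd_pow hd₂)) hg
    rw [natDegree_pow, zero_add, pow_one, mul_comm p] at hdeg
    exact absurd (Nat.lt_of_mul_lt_mul_right hdeg) this.not_gt
  | succ t ih =>
    by_contra! hcard
    obtain ⟨g, rfl, hgcard, hg0⟩ := exists_pow_eq_of_pow_three_dvd p h₁ hX hf0 (by omega)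
      ((pow_dvd_pow π₁ (by have := Nat.one_le_pow (t + 1) p hp; omega)).trans hd₁)
    have hgdeg : g.natDegree < (π₁ * π₂).natDegree * p ^ (t + 1) := by
      rw [natDegree_pow, pow_succ _ (t + 1), ← mul_assoc, mul_comm _ p] at hdeg
      exact Nat.lt_of_mul_lt_mul_left hdeg
    have h₁g : π₁ ^ (2 * p ^ t + 1) ∣ g :=
      h₁.pow_succ_dvd_of_pow_mul_succ_dvd_pow (by convert hd₁ using 2; ring)
    have := ih hg0 hgdeg h₁g (h₂.dvd_of_dvd_pow hd₂)
    omega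

theorem four_le_card_support {π₁ π₂ : K[X]} (h₁ : Prime π₁) (h₂ : Prime π₂)
    (hX₁ : ¬ π₁ ∣ X) (hX₂ : ¬ π₂ ∣ X) (hcop : IsCoprime π₁ π₂) (t : ℕ) {f : K[X]} (hf : f ≠ 0)
    (hdeg : f.natDegree < (π₁ * π₂).natDegree * p ^ (t + 1))
    (hd₁ : π₁ ^ (2 * p ^ t + 1) ∣ f) (hd₂ : π₂ ∣ f) : 4 ≤ f.support.card := by
  obtain ⟨k, g, hXg, rfl⟩ := WfDvdMonoid.max_power_factor hf irreducible_X
  rw [card_support_X_pow_mul]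
  have hXk {π : K[X]} (hπ : Prime π) (hX : ¬ π ∣ X) : ¬ π ∣ X ^ k :=
    fun h => hX (hπ.dvd_of_dvd_pow h)
  refine four_le_card_support_of_coeff_zero_ne_zero p h₁ h₂ hX₁ hcop t (mt X_dvd_iff.mpr hXg)
    ((natDegree_le_of_dvd (dvd_mul_left g _) hf).trans_lt hdeg)
    (h₁.pow_dvd_of_dvd_mul_left _ (hXk h₁ hX₁) hd₁) ?_
  simpa using h₂.pow_dvd_of_dvd_mul_left 1 (hXk h₂ hX₂) (by simpa using hd₂)

end Descent

section Binomial

variable {F : Type*} [Field F] {n : ℕ} {ξ : F}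

theorem isCoprime_X_pow_sub_C_X_pow_add_C (h2 : (2 : F) ≠ 0) (hξ : ξ ≠ 0) :
    IsCoprime (X ^ n - C ξ : F[X]) (X ^ n + C ξ) := by
  refine ⟨-C (2 * ξ)⁻¹, C (2 * ξ)⁻¹, ?_⟩
  have : C (2 * ξ)⁻¹ * C (2 * ξ) = 1 := by rw [← C_mul, inv_mul_cancel₀ (mul_ne_zero h2 hξ), C_1]
  rw [map_mul, map_ofNat] at this
  linear_combination this

theorem natDegree_X_pow_sub_C_pow_mul_X_pow_add_C_pow_lt {p : ℕ} (hp : 1 < p) (hn : 0 < n)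
    (t : ℕ) :
    ((X ^ n - C ξ) ^ p ^ (t + 1) * (X ^ n + C ξ) ^ p ^ t).natDegree < 2 * n * p ^ (t + 1) := by
  rw [natDegree_mul (pow_ne_zero _ (X_pow_sub_C_ne_zero hn ξ))
    (pow_ne_zero _ (X_pow_add_C_ne_zero hn ξ)), natDegree_pow, natDegree_pow,
    natDegree_X_pow_sub_C, natDegree_X_pow_add_C, pow_succ]
  nlinarith [Nat.mul_le_mul_left (p ^ t * n) hp, Nat.mul_pos (pow_pos (by omega : 0 < p) t) hn]

variable (p : ℕ) [Fact p.Prime] [CharP F p]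

theorem X_pow_sub_C_mul_X_pow_add_C_pow_char_pow (s : ℕ) :
    ((X ^ n - C ξ) * (X ^ n + C ξ)) ^ p ^ s = X ^ (2 * n * p ^ s) - C ((ξ ^ 2) ^ p ^ s) := by
  rw [show (X ^ n - C ξ) * (X ^ n + C ξ) = X ^ (2 * n) - C (ξ ^ 2) by rw [map_pow]; ring,
    sub_pow_char_pow, ← pow_mul, ← map_pow]

theorem card_support_X_pow_sub_C_pow_mul_X_pow_add_C_pow (hn : 0 < n) (hξ : ξ ≠ 0)
    (t : ℕ) : ((X ^ n - C ξ) ^ p ^ (t + 1) * (X ^ n + C ξ) ^ p ^ t).support.card = 4 := by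
  have hp := (Fact.out : p.Prime).one_lt
  rw [sub_pow_char_pow, add_pow_char_pow, ← pow_mul, ← pow_mul, ← map_pow, ← map_pow]
  exact card_support_X_pow_sub_C_mul_X_pow_add_C (by positivity)
    (Nat.mul_lt_mul_of_pos_left (Nat.pow_lt_pow_right hp t.lt_succ_self) (by omega))
    (pow_ne_zero _ hξ) (pow_ne_zero _ hξ)

end Binomial

end Polynomial

theorem stmt_19 (p s n : ℕ) (hp : p.Prime) (hodd : Odd p) (hs : 1 ≤ s) (hn : 1 ≤ n)
    (F : Type*) [Field F] [Fintype F] [CharP F p]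
    (ξ : F) (hξ : ξ ≠ 0)
    (hirr1 : Irreducible ((X : F[X]) ^ n - C ξ))
    (hirr2 : Irreducible ((X : F[X]) ^ n + C ξ))
    (lam : F) (hlam : lam = (ξ ^ 2) ^ p ^ s)
    (i j : ℕ) (hi1 : 2 * p ^ (s - 1) < i) (hi2 : i < p ^ s) (hj1 : 0 < j) (hj2 : j ≤ p ^ (s - 1)) :
    sInf {w : ℕ | ∃ f : F[X], f ≠ 0 ∧ f.natDegree < 2 * n * p ^ s ∧
        Ideal.Quotient.mk (Ideal.span {(X : F[X]) ^ (2 * n * p ^ s) - C lam}) f ∈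
          Ideal.span {Ideal.Quotient.mk (Ideal.span {(X : F[X]) ^ (2 * n * p ^ s) - C lam})
            (((X : F[X]) ^ n - C ξ) ^ i * ((X : F[X]) ^ n + C ξ) ^ j)} ∧
        w = f.support.card} = 4 := by
  have : Fact p.Prime := ⟨hp⟩
  obtain ⟨t, rfl⟩ : ∃ t, s = t + 1 := ⟨s - 1, by omega⟩
  rw [Nat.add_sub_cancel] at hi1 hj2
  have hn0 : n ≠ 0 := by omega
  have h2 : (2 : F) ≠ 0 :=
    Ring.two_ne_zero (by rw [ringChar.eq F p]; rintro rfl; norm_num at hodd)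
  have hmod : (X ^ n - C ξ) ^ i * (X ^ n + C ξ) ^ j ∣ X ^ (2 * n * p ^ (t + 1)) - C lam := by
    rw [hlam, ← X_pow_sub_C_mul_X_pow_add_C_pow_char_pow, mul_pow]
    exact mul_dvd_mul (pow_dvd_pow _ hi2.le)
      (pow_dvd_pow _ (hj2.trans (Nat.pow_le_pow_right hp.pos t.le_succ)))
  simp_rw [Ideal.Quotient.mk_mem_span_singleton_mk_iff hmod]
  refine IsLeast.csInf_eq ⟨⟨(X ^ n - C ξ) ^ p ^ (t + 1) * (X ^ n + C ξ) ^ p ^ t,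
    mul_ne_zero (pow_ne_zero _ hirr1.ne_zero) (pow_ne_zero _ hirr2.ne_zero),
    natDegree_X_pow_sub_C_pow_mul_X_pow_add_C_pow_lt hp.one_lt hn t,
    mul_dvd_mul (pow_dvd_pow _ hi2.le) (pow_dvd_pow _ hj2),
    (card_support_X_pow_sub_C_pow_mul_X_pow_add_C_pow p hn hξ t).symm⟩, ?_⟩
  rintro w ⟨f, hf, hfdeg, hmem, rfl⟩
  refine four_le_card_support p hirr1.prime hirr2.prime
    (not_dvd_X_of_coeff_zero_ne_zero hirr1 (by simp [coeff_X_pow, hn0.symm, hξ]))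
    (not_dvd_X_of_coeff_zero_ne_zero hirr2 (by simp [coeff_X_pow, hn0.symm, hξ]))
    (isCoprime_X_pow_sub_C_X_pow_add_C h2 hξ) t hf ?_
    (((pow_dvd_pow _ hi1).trans (dvd_mul_right _ _)).trans hmem)
    (((dvd_pow_self _ hj1.ne').trans (dvd_mul_left _ _)).trans hmem)
  rwa [natDegree_mul hirr1.ne_zero hirr2.ne_zero, natDegree_X_pow_sub_C, natDegree_X_pow_add_C,
    ← two_mul]
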